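/- Let R be a finite local ring with maximal ideal M of order m, and suppose |R| > 2m. Then the unitary Cayley graph G_R is Ramanujan (i.e., every adjacency eigenvalue other than ±|R^×| has absolute value at most 2√(|R^×| − 1)) if and only if |R| ≥ (m/2 + 1)^2. -/

import Mathlib

open Polynomial

/-- The unitary Cayley graph of a finite commutative ring `R`. -/
def unitaryCayley (R : Type*) [CommRing R] [Fintype R] [DecidableEq R] : SimpleGraph R where
  Adj x y := x ≠ y ∧ IsUnit (x - y)
  symm := by
    constructor
    intro x y h
    exact ⟨h.1.symm, by simpa using h.2.neg⟩
  loopless := ⟨fun x h => h.1 rfl⟩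

instance unitaryCayley.instDecidableRel (R : Type*) [CommRing R] [Fintype R] [DecidableEq R] :
    DecidableRel (unitaryCayley R).Adj := fun a b =>
  decidable_of_iff (a ≠ b ∧ ∃ c, (a - b) * c = 1)
    (by exact and_congr Iff.rfl isUnit_iff_exists_inv.symm)

/-- An `r`-regular graph is Ramanujan if every adjacency eigenvalue other than `±r`
has absolute value at most `2 * sqrt (r - 1)`. -/
def IsRamanujan {V : Type*} [Fintype V] [DecidableEq V] (G : SimpleGraph V)
    [DecidableRel G.Adj] (r : ℕ) : Prop :=
  ∀ μ ∈ (SimpleGraph.adjMatrix ℝ G).charpoly.roots,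
    |μ| ≠ (r : ℝ) → |μ| ≤ 2 * Real.sqrt ((r : ℝ) - 1)

/-- The energy of a graph: the sum of absolute values of its adjacency eigenvalues. -/
noncomputable def graphEnergy {V : Type*} [Fintype V] [DecidableEq V] (G : SimpleGraph V)
    [DecidableRel G.Adj] : ℝ :=
  ((SimpleGraph.adjMatrix ℝ G).charpoly.roots.map (fun μ => |μ|)).sum

/-!
In a local ring the non-units form the maximal ideal `M`, so `x ~ y` iff `x - y ∉ M` and the
adjacency matrix is `A = J - B`, with `J` the all-ones matrix and `B` the indicator matrix of
lying in the same coset of `M`. The relations `J² = nJ`, `JB = BJ = mJ`, `B² = mB` give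
`A (A + m) = rJ` and `AJ = rJ` for `r = n - m = |Rˣ|`, so `X (X + m) (X - r)` annihilates `A`;
the eigenvalue `-m` is attained on `B (e₀ - eₐ)` for any `a ∉ M`. As `2m < n` forces `m < r`,
being Ramanujan amounts to `m ≤ 2 √(r - 1)`, which is `(m/2 + 1)² ≤ n`.
-/

open Matrix

namespace Matrix

theorem of_one_mul_of_one {n α : Type*} [Fintype n] [NonAssocSemiring α] :
    (of 1 : Matrix n n α) * of 1 = Fintype.card n • of 1 := by
  ext i j
  simp [mul_apply]

variable {n K : Type*} [Fintype n] [DecidableEq n] [Field K]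

theorem mem_roots_charpoly_of_mulVec_eq_smul {A : Matrix n n K} {μ : K} {v : n → K}
    (hv : v ≠ 0) (hAv : A *ᵥ v = μ • v) : μ ∈ A.charpoly.roots := by
  have hμ : Module.End.HasEigenvalue (toLin' A) μ :=
    Module.End.hasEigenvalue_of_hasEigenvector
      ⟨Module.End.mem_eigenspace_iff.mpr (by rwa [toLin'_apply]), hv⟩
  rw [mem_roots A.charpoly_monic.ne_zero, ← mem_spectrum_iff_isRoot_charpoly,
    ← spectrum_toLin']
  exact hμ.mem_spectrum

theorem eval_eq_zero_of_mem_roots_charpoly [Nonempty n] {A : Matrix n n K} {p : K[X]}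
    (hp : aeval A p = 0) {μ : K} (hμ : μ ∈ A.charpoly.roots) : p.eval μ = 0 := by
  rw [mem_roots A.charpoly_monic.ne_zero, ← mem_spectrum_iff_isRoot_charpoly] at hμ
  simpa [hp, spectrum.zero_eq] using spectrum.subset_polynomial_aeval A p ⟨μ, hμ, rfl⟩

end Matrix

namespace AddSubgroup

variable {G α : Type*} [AddCommGroup G] (H : AddSubgroup G) [DecidablePred (· ∈ H)]

def sameCosetMatrix (α : Type*) [Zero α] [One α] : Matrix G G α :=
  of fun x y => if x - y ∈ H then 1 else 0

theorem sameCosetMatrix_comm [Zero α] [One α] (x y : G) :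
    H.sameCosetMatrix α x y = H.sameCosetMatrix α y x := by
  simp only [sameCosetMatrix, of_apply, H.sub_mem_comm_iff]

variable [Fintype G]

theorem sum_sameCosetMatrix_apply [AddCommMonoidWithOne α] (x : G) :
    ∑ y, H.sameCosetMatrix α x y = Nat.card H := by
  calc ∑ y, H.sameCosetMatrix α x y = ∑ y, if y ∈ H then (1 : α) else 0 :=
        Fintype.sum_equiv (Equiv.subLeft x) _ _ fun _ => rfl
    _ = Nat.card H := by
      rw [Finset.sum_boole, Nat.card_eq_fintype_card, Fintype.card_subtype]

theorem sameCosetMatrix_mul_self [NonAssocSemiring α] :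
    H.sameCosetMatrix α * H.sameCosetMatrix α = Nat.card H • H.sameCosetMatrix α := by
  ext x z
  have hsplit : ∀ y, H.sameCosetMatrix α x y * H.sameCosetMatrix α y z =
      H.sameCosetMatrix α x y * H.sameCosetMatrix α x z := by
    intro y
    by_cases hxy : x - y ∈ H
    · have hyz : y - z ∈ H ↔ x - z ∈ H := by
        rw [← H.add_mem_cancel_left hxy, sub_add_sub_cancel]
      simp [sameCosetMatrix, hxy, hyz]
    · simp [sameCosetMatrix, hxy]
  simp only [mul_apply, hsplit, ← Finset.sum_mul, sum_sameCosetMatrix_apply,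
    Matrix.smul_apply, nsmul_eq_mul]

theorem sameCosetMatrix_mul_of_one [NonAssocSemiring α] :
    H.sameCosetMatrix α * of 1 = Nat.card H • of 1 := by
  ext x z
  simp [mul_apply, sum_sameCosetMatrix_apply]

theorem of_one_mul_sameCosetMatrix [NonAssocSemiring α] :
    of 1 * H.sameCosetMatrix α = Nat.card H • of 1 := by
  ext x z
  simp [mul_apply, H.sameCosetMatrix_comm _ z, sum_sameCosetMatrix_apply]

theorem of_one_sub_sameCosetMatrix_mul_of_one [CommRing α] :
    (of 1 - H.sameCosetMatrix α) * of 1 = ((Fintype.card G : α) - Nat.card H) • of 1 := by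
  simp only [sub_mul, of_one_mul_of_one, sameCosetMatrix_mul_of_one]
  module

theorem of_one_sub_sameCosetMatrix_mul_sameCosetMatrix [CommRing α] :
    (of 1 - H.sameCosetMatrix α) * H.sameCosetMatrix α =
      (Nat.card H : α) • (of 1 - H.sameCosetMatrix α) := by
  simp only [sub_mul, of_one_mul_sameCosetMatrix, sameCosetMatrix_mul_self]
  module

variable [DecidableEq G]

theorem of_one_sub_sameCosetMatrix_mul_add_smul_one [CommRing α] :
    (of 1 - H.sameCosetMatrix α) * (of 1 - H.sameCosetMatrix α + (Nat.card H : α) • 1) =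
      ((Fintype.card G : α) - Nat.card H) • of 1 := by
  simp only [sub_mul, mul_sub, mul_add, Matrix.mul_smul, Matrix.mul_one, of_one_mul_of_one,
    of_one_mul_sameCosetMatrix, sameCosetMatrix_mul_of_one, sameCosetMatrix_mul_self]
  module

variable {K : Type*} [Field K]

theorem eq_of_mem_roots_charpoly_of_one_sub_sameCosetMatrix {μ : K}
    (hμ : μ ∈ (of 1 - H.sameCosetMatrix K).charpoly.roots) :
    μ = 0 ∨ μ = -(Nat.card H : K) ∨ μ = (Fintype.card G : K) - Nat.card H := by
  have hann : aeval (of 1 - H.sameCosetMatrix K)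
      ((X - C ((Fintype.card G : K) - Nat.card H)) * (X * (X + C (Nat.card H : K)))) = 0 := by
    simp only [map_mul, map_add, map_sub, aeval_X, aeval_C, Algebra.algebraMap_eq_smul_one]
    rw [of_one_sub_sameCosetMatrix_mul_add_smul_one, Matrix.mul_smul, sub_mul,
      of_one_sub_sameCosetMatrix_mul_of_one]
    simp only [sub_mul, Matrix.smul_mul, Matrix.one_mul]
    module
  have hroot := eval_eq_zero_of_mem_roots_charpoly hann hμ
  simp only [eval_mul, eval_sub, eval_add, eval_X, eval_C, mul_eq_zero, sub_eq_zero,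
    add_eq_zero_iff_eq_neg] at hroot
  tauto

theorem neg_card_mem_roots_charpoly_of_one_sub_sameCosetMatrix (hH : H ≠ ⊤) :
    -(Nat.card H : K) ∈ (of 1 - H.sameCosetMatrix K).charpoly.roots := by
  obtain ⟨a, ha⟩ : ∃ a, a ∉ H := by simpa [eq_top_iff'] using hH
  set w : G → K := Pi.single 0 1 - Pi.single a 1
  have hJw : (of 1 : Matrix G G K) *ᵥ w = 0 := by
    ext
    simp [w, mulVec_sub]
  refine mem_roots_charpoly_of_mulVec_eq_smul (v := H.sameCosetMatrix K *ᵥ w) ?_ ?_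
  · intro hzero
    simpa [w, mulVec_sub, sameCosetMatrix, ha] using congrFun hzero 0
  · rw [mulVec_mulVec, of_one_sub_sameCosetMatrix_mul_sameCosetMatrix, smul_mulVec, sub_mulVec,
      hJw, zero_sub, smul_neg, neg_smul]

end AddSubgroup

namespace IsLocalRing

variable (R : Type*) [CommRing R] [IsLocalRing R]

theorem card_units_add_card_maximalIdeal [Finite R] :
    Nat.card Rˣ + Nat.card (maximalIdeal R) = Nat.card R := by
  have hcompl : (maximalIdeal R : Set R)ᶜ = Set.range ((↑) : Rˣ → R) := by
    ext x
    simp [mem_maximalIdeal, mem_nonunits_iff, IsUnit]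
  rw [← Set.ncard_range_of_injective Units.val_injective, ← hcompl, add_comm,
    ← SetLike.coe_sort_coe, Nat.card_coe_set_eq]
  exact Set.ncard_add_ncard_compl _

variable [Fintype R] [DecidableEq R]

theorem unitaryCayley_adj_iff {x y : R} :
    (unitaryCayley R).Adj x y ↔ x - y ∉ maximalIdeal R := by
  rw [mem_maximalIdeal, mem_nonunits_iff, not_not]
  refine ⟨And.right, fun h => ⟨fun hxy => ?_, h⟩⟩
  rw [hxy, sub_self] at h
  exact not_isUnit_zero h

theorem adjMatrix_unitaryCayley [DecidablePred (· ∈ maximalIdeal R)] {α : Type*} [AddGroup α]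
    [One α] :
    (unitaryCayley R).adjMatrix α = of 1 - (maximalIdeal R).toAddSubgroup.sameCosetMatrix α := by
  ext x y
  by_cases h : x - y ∈ maximalIdeal R <;>
    simp only [SimpleGraph.adjMatrix_apply, unitaryCayley_adj_iff, AddSubgroup.sameCosetMatrix,
      of_apply, Matrix.sub_apply, Pi.one_apply, Submodule.mem_toAddSubgroup, h, not_true,
      not_false_eq_true, if_true, if_false, sub_zero, sub_self]

end IsLocalRing

theorem le_two_mul_sqrt_sub_one_iff {a b : ℝ} (ha : 0 ≤ a) (hb : 1 ≤ b) :
    a ≤ 2 * √(b - 1) ↔ (a / 2 + 1) ^ 2 ≤ b + a := by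
  rw [← div_le_iff₀' two_pos, Real.le_sqrt (by positivity) (by linarith)]
  constructor <;> intro h <;> nlinarith

theorem isRamanujan_iff_of_roots_charpoly {V : Type*} [Fintype V] [DecidableEq V]
    (G : SimpleGraph V) [DecidableRel G.Adj] {r m : ℕ} (hmr : m < r)
    (hroots : ∀ μ ∈ (G.adjMatrix ℝ).charpoly.roots, μ = 0 ∨ μ = -(m : ℝ) ∨ μ = r)
    (hneg : -(m : ℝ) ∈ (G.adjMatrix ℝ).charpoly.roots) :
    IsRamanujan G r ↔ (m : ℝ) ≤ 2 * √((r : ℝ) - 1) := by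
  have hmr' : (m : ℝ) < r := by exact_mod_cast hmr
  have habs : |(-(m : ℝ))| = m := by simp
  constructor
  · intro hG
    simpa [habs] using hG _ hneg (by rw [habs]; exact hmr'.ne)
  · rintro hm μ hμ hμr
    rcases hroots μ hμ with rfl | rfl | rfl
    · simp only [abs_zero]
      positivity
    · rwa [habs]
    · exact absurd (abs_of_nonneg (Nat.cast_nonneg r)) hμr

/-- Let `R` be a finite local ring with maximal ideal `M` of order `m`, with `|R| > 2m`.
Then `G_R` is Ramanujan iff `|R| ≥ (m/2 + 1)^2`. -/
theorem stmt_9 (R : Type*) [CommRing R] [IsLocalRing R] [Fintype R] [DecidableEq R]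
    (M : Ideal R) (hM : M.IsMaximal) (m : ℕ) (hm : m = Nat.card M)
    (hR : 2 * m < Fintype.card R) :
    IsRamanujan (unitaryCayley R) (Nat.card Rˣ) ↔
      ((m : ℝ) / 2 + 1) ^ 2 ≤ (Fintype.card R : ℝ) := by
  classical
  obtain rfl := IsLocalRing.eq_maximalIdeal hM
  have hcard : Nat.card Rˣ + m = Fintype.card R := by
    rw [hm, ← Nat.card_eq_fintype_card]
    exact IsLocalRing.card_units_add_card_maximalIdeal R
  have hm' : Nat.card (IsLocalRing.maximalIdeal R).toAddSubgroup = m := hm.symm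
  have hA := IsLocalRing.adjMatrix_unitaryCayley R (α := ℝ)
  have hne : (IsLocalRing.maximalIdeal R).toAddSubgroup ≠ ⊤ := fun h =>
    (IsLocalRing.maximalIdeal.isMaximal R).ne_top (Submodule.toAddSubgroup_injective h)
  have hr : (1 : ℝ) ≤ Nat.card Rˣ := by exact_mod_cast (show 1 ≤ Nat.card Rˣ by omega)
  rw [isRamanujan_iff_of_roots_charpoly (m := m) _ (by omega), ← hcard, Nat.cast_add,
    le_two_mul_sqrt_sub_one_iff (Nat.cast_nonneg _) hr]
  · rw [hA]
    intro μ hμ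
    have h := AddSubgroup.eq_of_mem_roots_charpoly_of_one_sub_sameCosetMatrix _ hμ
    rwa [hm', ← hcard, Nat.cast_add, add_sub_cancel_right] at h
  · rw [hA, ← hm']
    exact AddSubgroup.neg_card_mem_roots_charpoly_of_one_sub_sameCosetMatrix _ hne
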